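/- Let T_0 be a fixed theory and define, for theories S, T ⊇ T_0, the relation S <_β T iff every β-model of T contains (as an element) a β-model of S. Then the restriction of <_β to theories extending T_0 that have at least one β-model is a well-founded relation. -/

import Mathlib

open FirstOrder Language

namespace BetaRank

abbrev ZFS : Type 1 := ZFSet.{0}
abbrev Ord0 : Type 1 := Ordinal.{0}

abbrev Sent : Type := Language.graph.Sentence
abbrev Fml (n : ℕ) : Type := Language.graph.Formula (Fin n)

/-- The ∈-structure on a class (set) of ZF sets. -/
def structC (A : Set ZFS) : Language.graph.Structure ↥A where
  RelMap | .adj => fun x => (x 0).1 ∈ (x 1).1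

/-- Satisfaction of a sentence in a class of ZF sets with the true membership relation. -/
def SatC (A : Set ZFS) (σ : Sent) : Prop :=
  @Sentence.Realize Language.graph ↥A (structC A) σ

/-- Satisfaction of a theory. -/
def SatT (A : Set ZFS) (T : Set Sent) : Prop := ∀ σ ∈ T, SatC A σ

/-- The complete first-order theory of a class of ZF sets. -/
def ThC (A : Set ZFS) : Set Sent := { σ | SatC A σ }

/-- Realization of a formula with free variables in a class of ZF sets. -/
def FRealize (A : Set ZFS) {n : ℕ} (φ : Fml n) (v : Fin n → ↥A) : Prop :=
  @Formula.Realize Language.graph ↥A (structC A) _ φ v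

/-- Realization of a bounded formula (all variables among the `n` bound slots). -/
def BRealize (A : Set ZFS) {n : ℕ} (φ : Language.graph.BoundedFormula Empty n)
    (xs : Fin n → ↥A) : Prop :=
  @BoundedFormula.Realize Language.graph ↥A (structC A) _ _ φ Empty.elim xs

/-- Satisfaction over (the members of) a single ZF set with the true membership relation. -/
def SatZ (M : ZFS) (σ : Sent) : Prop := SatC M.toSet σ

def SatZT (M : ZFS) (T : Set Sent) : Prop := ∀ σ ∈ T, SatZ M σ

/-- A transitive (set) model of a theory: the formal rendering of a β-model of set theory. -/
def TransModel (M : ZFS) (T : Set Sent) : Prop := M.IsTransitive ∧ SatZT M T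

/-- The first-order definable subsets (with parameters) of a class of ZF sets. -/
def defSub (A : Set ZFS) : Set ZFS :=
  { y | (∀ z ∈ y, z ∈ A) ∧ ∃ (k : ℕ) (φ : Fml (k + 1)) (p : Fin k → ↥A),
      ∀ z : ZFS, z ∈ y ↔ ∃ h : z ∈ A, FRealize A φ (Fin.cons ⟨z, h⟩ p) }

/-- The constructible hierarchy, as classes of ZF sets. -/
noncomputable def Lv (α : Ord0) : Set ZFS :=
  Ordinal.limitRecOn α ∅ (fun _ ih => defSub ih)
    (fun o _ ih => { x | ∃ β, ∃ h : β < o, x ∈ ih β h })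

/-- The class L of constructible sets. -/
noncomputable def Lclass : Set ZFS := { x | ∃ α, x ∈ Lv α }

/-- `A` is a fully elementary subclass of `B` (with respect to ∈). -/
def ElemIn (A B : Set ZFS) : Prop :=
  A ⊆ B ∧ ∀ (n : ℕ) (φ : Fml n) (v : Fin n → ZFS) (hA : ∀ i, v i ∈ A) (hB : ∀ i, v i ∈ B),
    FRealize A φ (fun i => ⟨v i, hA i⟩) ↔ FRealize B φ (fun i => ⟨v i, hB i⟩)

/-- `σ̂(α)`: the least `σ` with `L_σ ≺ L_α`. -/
noncomputable def sigmaHat (α : Ord0) : Ord0 := sInf { σ | ElemIn (Lv σ) (Lv α) }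

/-- Δ₀ (bounded) formulas in the language of set theory. -/
inductive IsDelta0 : ∀ {α : Type} {n : ℕ}, Language.graph.BoundedFormula α n → Prop
  | falsum {α n} : IsDelta0 (BoundedFormula.falsum : Language.graph.BoundedFormula α n)
  | equal {α n} (t u : Language.graph.Term (α ⊕ Fin n)) : IsDelta0 (Term.bdEqual t u)
  | rel {α n l} (R : Language.graph.Relations l)
      (ts : Fin l → Language.graph.Term (α ⊕ Fin n)) : IsDelta0 (BoundedFormula.rel R ts)
  | imp {α n} {φ ψ : Language.graph.BoundedFormula α n} :
      IsDelta0 φ → IsDelta0 ψ → IsDelta0 (φ.imp ψ)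
  | ball {α n} (t : Language.graph.Term (α ⊕ Fin n))
      {φ : Language.graph.BoundedFormula α (n + 1)} : IsDelta0 φ →
      IsDelta0 ((BoundedFormula.imp
        (Language.adj.boundedFormula₂ (Term.var (Sum.inr (Fin.last n))) (t.liftAt 1 n)) φ).all)

/-- Σ₁ formulas: existential quantifiers in front of a Δ₀ matrix. -/
inductive IsSigma1 : ∀ {α : Type} {n : ℕ}, Language.graph.BoundedFormula α n → Prop
  | of_delta0 {α n} {φ : Language.graph.BoundedFormula α n} : IsDelta0 φ → IsSigma1 φ
  | ex {α n} {φ : Language.graph.BoundedFormula α (n + 1)} : IsSigma1 φ → IsSigma1 φ.ex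

/-- Δ₀-collection holds in the class `A`. -/
def Delta0Collection (A : Set ZFS) : Prop :=
  ∀ (n : ℕ) (φ : Language.graph.BoundedFormula Empty (n + 2)), IsDelta0 φ →
    ∀ (p : Fin n → ↥A) (a : ↥A),
      (∀ x : ↥A, x.1 ∈ a.1 → ∃ y : ↥A, BRealize A φ (Fin.snoc (Fin.snoc p x) y)) →
      ∃ b : ↥A, ∀ x : ↥A, x.1 ∈ a.1 →
        ∃ y : ↥A, y.1 ∈ b.1 ∧ BRealize A φ (Fin.snoc (Fin.snoc p x) y)

/-- Full first-order collection holds in the class `A`. -/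
def FullCollection (A : Set ZFS) : Prop :=
  ∀ (n : ℕ) (φ : Language.graph.BoundedFormula Empty (n + 2)),
    ∀ (p : Fin n → ↥A) (a : ↥A),
      (∀ x : ↥A, x.1 ∈ a.1 → ∃ y : ↥A, BRealize A φ (Fin.snoc (Fin.snoc p x) y)) →
      ∃ b : ↥A, ∀ x : ↥A, x.1 ∈ a.1 →
        ∃ y : ↥A, y.1 ∈ b.1 ∧ BRealize A φ (Fin.snoc (Fin.snoc p x) y)

/-- An ordinal is admissible iff it is a limit and `L_α` satisfies Δ₀-collection. -/
def AdmissibleOrd (α : Ord0) : Prop := (α ≠ 0 ∧ ∀ a < α, Order.succ a < α) ∧ Delta0Collection (Lv α)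

/-- `ξ` is a limit of admissible ordinals. -/
def LimitOfAdmissibles (ξ : Ord0) : Prop :=
  0 < ξ ∧ ∀ γ < ξ, ∃ δ, γ < δ ∧ δ < ξ ∧ AdmissibleOrd δ

/-- `ξ` is locally countable: `L_ξ` satisfies "every set is countable". -/
def LocCtbl (ξ : Ord0) : Prop :=
  ∀ x ∈ Lv ξ, ∃ f ∈ Lv ξ, ZFSet.IsFunc x ZFSet.omega f ∧
    ∀ z w u : ZFS, z.pair u ∈ f → w.pair u ∈ f → z = w

/-- Every element of `A` is definable in `(A, ∈)` without parameters. -/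
def PointwiseDefinable (A : Set ZFS) : Prop :=
  ∀ x : ↥A, ∃ φ : Fml 1, ∀ y : ↥A, FRealize A φ ![y] ↔ y = x

/-- A set is (like) a von Neumann ordinal. -/
def IsVN (x : ZFS) : Prop := x.IsOrdinal

/-- The von Neumann natural numbers as ZF sets. -/
def numZF : ℕ → ZFS := fun n => Nat.rec ∅ (fun _ ih => insert ih ih) n

/-- f is a set of ordered pairs which is single-valued. -/
def IsFunLike (f : ZFS) : Prop :=
  (∀ p ∈ f, ∃ x y : ZFS, p = x.pair y) ∧
    ∀ x y₁ y₂ : ZFS, x.pair y₁ ∈ f → x.pair y₂ ∈ f → y₁ = y₂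

/-- `x` is in the field of the relation `r`. -/
def InFld (r x : ZFS) : Prop := ∃ y : ZFS, x.pair y ∈ r ∨ y.pair x ∈ r

/-- `f` is the Mostowski collapsing function of the relation `r`:
`dom f = field r` and `f(x) = { f(y) : (y,x) ∈ r }`. -/
def IsCollapsing (f r : ZFS) : Prop :=
  IsFunLike f ∧ (∀ x : ZFS, (∃ y, x.pair y ∈ f) ↔ InFld r x) ∧
    ∀ x v : ZFS, x.pair v ∈ f → ∀ b : ZFS, b ∈ v ↔ ∃ y : ZFS, y.pair x ∈ r ∧ y.pair b ∈ f

/-- `r` is a regular relation from the point of view of `M`: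
every nonempty set in `M` has an `r`-minimal element. -/
def RegularIn (M r : ZFS) : Prop :=
  ∀ u ∈ M, u ≠ ∅ → ∃ x ∈ u, ∀ y ∈ u, y.pair x ∉ r

/-- The axiom Beta holds in `M`: every regular relation in `M` has a collapsing function in `M`. -/
def BetaIn (M : ZFS) : Prop := ∀ r ∈ M, RegularIn M r → ∃ f ∈ M, IsCollapsing f r

/-- An `L_∈`-structure coded by a pair of ZF sets (domain, membership relation). -/
def structP (m e : ZFS) : Language.graph.Structure ↥m.toSet where
  RelMap | .adj => fun x => ZFSet.pair (x 0).1 (x 1).1 ∈ e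

def SatP (m e : ZFS) (T : Set Sent) : Prop :=
  ∀ σ ∈ T, @Sentence.Realize Language.graph ↥m.toSet (structP m e) σ

/-- The pair `(m, e)` is a well-founded `L_∈`-structure. -/
def WFPair (m e : ZFS) : Prop :=
  (∀ p ∈ e, ∃ x ∈ m, ∃ y ∈ m, p = x.pair y) ∧
    WellFounded (fun x y : ↥m.toSet => ZFSet.pair x.1 y.1 ∈ e)

/-- A well-founded coded model of the theory `T`. -/
def WFModelP (m e : ZFS) (T : Set Sent) : Prop := WFPair m e ∧ SatP m e T


/-- `S <_β T` : every (coded) well-founded model of `T` contains, as an element of its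
domain, a (coded) well-founded model of `S`. -/
def betaLtW (S T : Set Sent) : Prop :=
  ∀ m e : ZFS, WFModelP m e T → ∃ n e' : ZFS, ZFSet.pair n e' ∈ m ∧ WFModelP n e' S

/-! Every theory with a well-founded model gets the least rank of the domain of such a model.
If `S <_β T`, a model of `T` of least rank contains a model of `S` inside one of its elements,
which therefore has strictly smaller rank; so `<_β` is pulled back from `<` on ordinals. -/

theorem rank_lt_of_pair_mem {x y m : ZFS} (h : x.pair y ∈ m) : x.rank < m.rank :=
  calc x.rank < ({x} : ZFS).rank := ZFSet.rank_lt_of_mem (ZFSet.mem_singleton.2 rfl)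
    _ < (x.pair y).rank := ZFSet.rank_lt_of_mem (ZFSet.mem_insert _ _)
    _ < m.rank := ZFSet.rank_lt_of_mem h

noncomputable def modelRank (T : Set Sent) : Ord0 :=
  sInf { o | ∃ m e : ZFS, WFModelP m e T ∧ m.rank = o }

theorem modelRank_le_rank {T : Set Sent} {m e : ZFS} (h : WFModelP m e T) :
    modelRank T ≤ m.rank :=
  csInf_le' ⟨m, e, h, rfl⟩

theorem exists_wfModel_rank_eq_modelRank {T : Set Sent} (hT : ∃ m e : ZFS, WFModelP m e T) :
    ∃ m e : ZFS, WFModelP m e T ∧ m.rank = modelRank T :=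
  have ⟨m, e, h⟩ := hT
  csInf_mem (s := { o | ∃ m e : ZFS, WFModelP m e T ∧ m.rank = o }) ⟨m.rank, m, e, h, rfl⟩

theorem modelRank_lt_of_betaLtW {S T : Set Sent} (hT : ∃ m e : ZFS, WFModelP m e T)
    (hST : betaLtW S T) : modelRank S < modelRank T := by
  obtain ⟨m, e, hm, hrank⟩ := exists_wfModel_rank_eq_modelRank hT
  obtain ⟨n, e', hmem, hn⟩ := hST m e hm
  calc modelRank S ≤ n.rank := modelRank_le_rank hn
    _ < m.rank := rank_lt_of_pair_mem hmem
    _ = modelRank T := hrank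

/-- the restriction of `<_β` to theories extending `T0` that have at least one
β-model (well-founded model) is a well-founded relation. -/
theorem betaLt_wellFounded (T0 : Set Sent) :
    WellFounded
      (fun S T : {T : Set Sent // T0 ⊆ T ∧ ∃ m e : ZFS, WFModelP m e T} =>
        betaLtW S.1 T.1) :=
  Subrelation.wf (fun {_ T} hST => modelRank_lt_of_betaLtW T.2.2 hST)
    (InvImage.wf (fun T : {T : Set Sent // T0 ⊆ T ∧ ∃ m e : ZFS, WFModelP m e T} =>
      modelRank T.1) wellFounded_lt)

end BetaRank
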